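/- Suppose ψ ∈ C(ℝᵈ) ∩ L¹(ℝᵈ) has nonnegative Fourier transform ψ̂ which is not identically zero, and Hess ψ exists, is continuous and integrable with Fourier transform −ωωᵀψ̂(ω). Then for any finite set of pairwise distinct points x₁,…,x_N ∈ ℝᵈ and any vectors α₁,…,α_N ∈ ℂᵈ, Σⱼₖ ᾱⱼᵀ(−Hess ψ)(xⱼ−xₖ)αₖ = (2π)^{−d/2} ∫ ψ̂(ω) |Σⱼ (ᾱⱼ·ω) e^{i xⱼ·ω}|² dω ≥ 0. -/

import Mathlib

open MeasureTheory Matrix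

/-- If `ψ ∈ C(ℝᵈ) ∩ L¹(ℝᵈ)` has nonnegative, not identically zero, Fourier
transform `ψ̂`, and its Hessian `H` is continuous and integrable with Fourier
transform `−ω ωᵀ ψ̂(ω)` (with Fourier inversion valid), then for pairwise
distinct points `x₁,…,x_N` and vectors `α₁,…,α_N ∈ ℂᵈ`,
`Σⱼₖ ᾱⱼᵀ(−Hess ψ)(xⱼ−xₖ)αₖ = (2π)^{−d/2} ∫ ψ̂(ω) |Σⱼ (ᾱⱼ·ω) e^{i xⱼ·ω}|² dω ≥ 0`. -/
theorem stmt12 (d N : ℕ)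
    (ψ : EuclideanSpace ℝ (Fin d) → ℂ)
    (ψhat : EuclideanSpace ℝ (Fin d) → ℝ)
    (H : EuclideanSpace ℝ (Fin d) → Matrix (Fin d) (Fin d) ℂ)
    (hψc : Continuous ψ) (hψint : Integrable ψ)
    (hpos : ∀ ω, 0 ≤ ψhat ω) (hne : ψhat ≠ 0)
    (hHc : Continuous H)
    (hHint : ∀ p q : Fin d, Integrable fun x => H x p q)
    (hint2 : Integrable fun ω : EuclideanSpace ℝ (Fin d) => ‖ω‖ ^ 2 * ψhat ω)
    (hinv : ∀ x, ψ x = ((2 * Real.pi) ^ (-(d : ℝ) / 2) : ℝ) *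
      ∫ ω, (ψhat ω : ℂ) * Complex.exp (Complex.I * ((∑ i, x i * ω i : ℝ) : ℂ)))
    (hHinv : ∀ x, ∀ p q : Fin d, H x p q = ((2 * Real.pi) ^ (-(d : ℝ) / 2) : ℝ) *
      ∫ ω, -((ω p : ℂ) * (ω q : ℂ)) * (ψhat ω : ℂ) *
        Complex.exp (Complex.I * ((∑ i, x i * ω i : ℝ) : ℂ)))
    (x : Fin N → EuclideanSpace ℝ (Fin d)) (hx : Function.Injective x)
    (α : Fin N → Fin d → ℂ) :
    (∑ j, ∑ k, star (α j) ⬝ᵥ (-(H (x j - x k))).mulVec (α k))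
      = (((2 * Real.pi) ^ (-(d : ℝ) / 2) *
          ∫ ω, ψhat ω * ‖∑ j, (∑ p, (starRingEnd ℂ) (α j p) * (ω p : ℂ)) *
            Complex.exp (Complex.I * ((∑ i, x j i * ω i : ℝ) : ℂ))‖ ^ 2 : ℝ) : ℂ) ∧
    (0 : ℝ) ≤ (2 * Real.pi) ^ (-(d : ℝ) / 2) *
          ∫ ω, ψhat ω * ‖∑ j, (∑ p, (starRingEnd ℂ) (α j p) * (ω p : ℂ)) *
            Complex.exp (Complex.I * ((∑ i, x j i * ω i : ℝ) : ℂ))‖ ^ 2 := by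
  set C : ℝ := (2 * Real.pi) ^ (-(d : ℝ) / 2) with hC
  have hCpos : 0 < C := Real.rpow_pos_of_pos (by positivity) _
  have part2 : (0:ℝ) ≤ C * ∫ ω : EuclideanSpace ℝ (Fin d),
      ψhat ω * ‖∑ j, (∑ p, (starRingEnd ℂ) (α j p) * (ω p : ℂ)) *
      Complex.exp (Complex.I * ((∑ i, x j i * ω i : ℝ) : ℂ))‖ ^ 2 := by
    refine mul_nonneg hCpos.le (integral_nonneg fun ω => ?_)
    exact mul_nonneg (hpos ω) (by positivity)
  refine ⟨?_, part2⟩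
  rcases Nat.eq_zero_or_pos d with hd | hd
  · subst hd
    simp
  -- coordinate bound
  have hcoord : ∀ (ω : EuclideanSpace ℝ (Fin d)) (p : Fin d), ‖((ω p : ℝ) : ℂ)‖ ≤ ‖ω‖ := by
    intro ω p
    rw [Complex.norm_real, Real.norm_eq_abs, EuclideanSpace.norm_eq]
    calc |ω p| = Real.sqrt (‖ω p‖^2) := by
          rw [Real.norm_eq_abs, Real.sqrt_sq_eq_abs, abs_abs]
      _ ≤ _ := Real.sqrt_le_sqrt (Finset.single_le_sum (f := fun i => ‖ω i‖^2)
          (fun i _ => by positivity) (Finset.mem_univ p))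
  -- ψhat is a.e. strongly measurable
  have h0 : (volume : Measure (EuclideanSpace ℝ (Fin d))) {0} = 0 := by
    have : Nontrivial (EuclideanSpace ℝ (Fin d)) := by
      refine ⟨⟨0, EuclideanSpace.single ⟨0, hd⟩ 1, fun h => ?_⟩⟩
      have := congrArg (fun v : EuclideanSpace ℝ (Fin d) => v ⟨0, hd⟩) h
      simp [EuclideanSpace.single_apply] at this
    haveI := Module.punctured_nhds_neBot ℝ (EuclideanSpace ℝ (Fin d))
    exact measure_singleton 0
  have hψm : AEStronglyMeasurable ψhat (volume : Measure (EuclideanSpace ℝ (Fin d))) := by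
    have h1 : AEMeasurable (fun ω : EuclideanSpace ℝ (Fin d) => (‖ω‖^2 * ψhat ω) / ‖ω‖^2)
        volume := hint2.aemeasurable.div ((continuous_norm.pow 2).measurable.aemeasurable)
    refine (aestronglyMeasurable_iff_aemeasurable.mpr (h1.congr ?_))
    have hae : ∀ᵐ ω : EuclideanSpace ℝ (Fin d) ∂volume, ω ≠ 0 := by
      rw [ae_iff]; simpa using h0
    filter_upwards [hae] with ω hω
    have hn : ‖ω‖ ≠ 0 := norm_ne_zero_iff.2 hω
    field_simp
  have hψmC : AEStronglyMeasurable (fun ω : EuclideanSpace ℝ (Fin d) => (ψhat ω : ℂ)) volume :=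
    Complex.continuous_ofReal.comp_aestronglyMeasurable hψm
  -- integrability of `ψhat * b`
  have hIntb : ∀ (b : EuclideanSpace ℝ (Fin d) → ℂ) (M : ℝ), Continuous b →
      (∀ ω, ‖b ω‖ ≤ M * ‖ω‖^2) →
      Integrable (fun ω : EuclideanSpace ℝ (Fin d) => (ψhat ω : ℂ) * b ω) := by
    intro b M hb hbd
    refine Integrable.mono' (g := fun ω => M * (‖ω‖^2 * ψhat ω)) (hint2.const_mul M)
      (hψmC.mul hb.aestronglyMeasurable) ?_
    filter_upwards with ω
    rw [norm_mul, Complex.norm_real, Real.norm_eq_abs, abs_of_nonneg (hpos ω)]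
    calc ψhat ω * ‖b ω‖ ≤ ψhat ω * (M * ‖ω‖^2) :=
          mul_le_mul_of_nonneg_left (hbd ω) (hpos ω)
      _ = M * (‖ω‖^2 * ψhat ω) := by ring
  -- norm of exponentials
  have hne1 : ∀ (r : ℝ), ‖Complex.exp (Complex.I * (r:ℂ))‖ = 1 := by
    intro r; simp [Complex.norm_exp]
  have hne2 : ∀ (r : ℝ), ‖Complex.exp (-(Complex.I * (r:ℂ)))‖ = 1 := by
    intro r; simp [Complex.norm_exp]
  -- the elementary integrand
  set f : Fin N → Fin N → Fin d → Fin d → EuclideanSpace ℝ (Fin d) → ℂ := fun j k p q ω =>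
    (ψhat ω : ℂ) * ((starRingEnd ℂ) (α j p) * (ω p : ℂ) *
      Complex.exp (Complex.I * ((∑ i, x j i * ω i : ℝ) : ℂ)) *
      (α k q * (ω q : ℂ) * Complex.exp (-(Complex.I * ((∑ i, x k i * ω i : ℝ) : ℂ))))) with hf
  have hfint : ∀ j k p q, Integrable (f j k p q) := by
    intro j k p q
    refine hIntb _ (‖α j p‖ * ‖α k q‖) ?_ ?_
    · fun_prop
    · intro ω
      calc ‖(starRingEnd ℂ) (α j p) * (ω p : ℂ) *
            Complex.exp (Complex.I * ((∑ i, x j i * ω i : ℝ) : ℂ)) *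
            (α k q * (ω q : ℂ) * Complex.exp (-(Complex.I * ((∑ i, x k i * ω i : ℝ) : ℂ))))‖
          = ‖α j p‖ * ‖((ω p : ℝ):ℂ)‖ * (‖α k q‖ * ‖((ω q : ℝ):ℂ)‖) := by
            simp only [norm_mul, hne1, hne2, mul_one, RCLike.norm_conj]
        _ ≤ ‖α j p‖ * ‖ω‖ * (‖α k q‖ * ‖ω‖) := by
            gcongr <;> [exact hcoord ω p; exact hcoord ω q]
        _ = ‖α j p‖ * ‖α k q‖ * ‖ω‖^2 := by ring
  -- splitting of exponentials
  have hesub : ∀ j k (ω : EuclideanSpace ℝ (Fin d)),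
      Complex.exp (Complex.I * ((∑ i, (x j - x k) i * ω i : ℝ) : ℂ))
        = Complex.exp (Complex.I * ((∑ i, x j i * ω i : ℝ) : ℂ)) *
          Complex.exp (-(Complex.I * ((∑ i, x k i * ω i : ℝ) : ℂ))) := by
    intro j k ω
    rw [← Complex.exp_add]
    congr 1
    have hsum : (∑ i, (x j - x k) i * ω i : ℝ)
        = (∑ i, x j i * ω i) - (∑ i, x k i * ω i) := by
      rw [← Finset.sum_sub_distrib]
      refine Finset.sum_congr rfl fun i _ => ?_
      have : (x j - x k) i = x j i - x k i := rfl
      rw [this]; ring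
    rw [hsum]; push_cast; ring
  -- per-term identity
  have hterm : ∀ j k p q, (starRingEnd ℂ) (α j p) * ((-(H (x j - x k))) p q) * α k q
      = (C:ℂ) * ∫ ω, f j k p q ω := by
    intro j k p q
    rw [Matrix.neg_apply, hHinv]
    rw [← mul_neg, ← integral_neg]
    have : ∀ ω : EuclideanSpace ℝ (Fin d),
        -(-((ω p : ℂ) * (ω q : ℂ)) * (ψhat ω : ℂ) *
          Complex.exp (Complex.I * ((∑ i, (x j - x k) i * ω i : ℝ) : ℂ)))
        = ((ω p : ℂ) * (ω q : ℂ)) * (ψhat ω : ℂ) *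
          Complex.exp (Complex.I * ((∑ i, (x j - x k) i * ω i : ℝ) : ℂ)) := by
      intro ω; ring
    rw [integral_congr_ae (Filter.Eventually.of_forall this)]
    rw [show (starRingEnd ℂ) (α j p) * (((C:ℝ):ℂ) *
        ∫ ω, ((ω p : ℝ):ℂ) * ((ω q : ℝ):ℂ) * (ψhat ω : ℂ) *
          Complex.exp (Complex.I * ((∑ i, (x j - x k) i * ω i : ℝ) : ℂ))) * α k q
      = ((C:ℝ):ℂ) * ((∫ ω, ((ω p : ℝ):ℂ) * ((ω q : ℝ):ℂ) * (ψhat ω : ℂ) *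
          Complex.exp (Complex.I * ((∑ i, (x j - x k) i * ω i : ℝ) : ℂ))) *
            ((starRingEnd ℂ) (α j p) * α k q)) from by ring, ← integral_mul_const]
    congr 1
    refine integral_congr_ae (Filter.Eventually.of_forall fun ω => ?_)
    simp only [hf, hesub]
    ring
  -- expand the quadratic form
  have expand : ∀ j k, star (α j) ⬝ᵥ (-(H (x j - x k))).mulVec (α k)
      = ∑ p, ∑ q, (starRingEnd ℂ) (α j p) * ((-(H (x j - x k))) p q) * α k q := by
    intro j k
    simp only [dotProduct, Matrix.mulVec, Pi.star_apply, Finset.mul_sum]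
    exact Finset.sum_congr rfl fun p _ => Finset.sum_congr rfl fun q _ => by
      rw [starRingEnd_apply]; ring
  calc (∑ j, ∑ k, star (α j) ⬝ᵥ (-(H (x j - x k))).mulVec (α k))
      = ∑ j, ∑ k, ∑ p, ∑ q, ((C:ℝ):ℂ) * ∫ ω, f j k p q ω := by
        refine Finset.sum_congr rfl fun j _ => Finset.sum_congr rfl fun k _ => ?_
        rw [expand j k]
        exact Finset.sum_congr rfl fun p _ => Finset.sum_congr rfl fun q _ => hterm j k p q
    _ = ((C:ℝ):ℂ) * ∑ t : (Fin N × Fin N) × Fin d × Fin d, ∫ ω, f t.1.1 t.1.2 t.2.1 t.2.2 ω := by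
        simp only [Fintype.sum_prod_type, ← Finset.mul_sum]
    _ = ((C:ℝ):ℂ) * ∫ ω, ∑ t : (Fin N × Fin N) × Fin d × Fin d, f t.1.1 t.1.2 t.2.1 t.2.2 ω := by
        rw [← integral_finset_sum _ (fun t _ => hfint t.1.1 t.1.2 t.2.1 t.2.2)]
    _ = ((C:ℝ):ℂ) * ∫ ω, (ψhat ω : ℂ) *
          ((∑ j, (∑ p, (starRingEnd ℂ) (α j p) * ((ω p : ℝ):ℂ)) *
            Complex.exp (Complex.I * ((∑ i, x j i * ω i : ℝ) : ℂ))) *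
           (starRingEnd ℂ) (∑ j, (∑ p, (starRingEnd ℂ) (α j p) * ((ω p : ℝ):ℂ)) *
            Complex.exp (Complex.I * ((∑ i, x j i * ω i : ℝ) : ℂ)))) := by
        congr 1
        refine integral_congr_ae (Filter.Eventually.of_forall fun ω => ?_)
        simp only [Fintype.sum_prod_type, hf]
        rw [map_sum, Finset.sum_mul_sum, Finset.mul_sum]
        refine Finset.sum_congr rfl fun j _ => ?_
        rw [Finset.mul_sum]
        refine Finset.sum_congr rfl fun k _ => ?_
        simp only [_root_.map_mul, map_sum, Complex.conj_conj, Complex.conj_ofReal,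
          ← Complex.exp_conj, Complex.conj_I, neg_mul]
        simp only [Finset.sum_mul, Finset.mul_sum]
        rw [Finset.sum_comm]
    _ = _ := by
        have hre : ∀ g : EuclideanSpace ℝ (Fin d) → ℝ, (↑(∫ ω, g ω) : ℂ) = ∫ ω, (g ω : ℂ) :=
          fun g => (integral_ofReal (𝕜 := ℂ)).symm
        rw [Complex.ofReal_mul, hre]
        congr 1
        refine integral_congr_ae (Filter.Eventually.of_forall fun ω => ?_)
        beta_reduce
        rw [Complex.ofReal_mul]
        congr 1
        rw [Complex.mul_conj]
        norm_cast
        rw [Complex.sq_norm]
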